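/- Let r > 1/2. There exists a constant c > 0, depending only on r, such that for every τ ≥ 0 and all sequences α, β : ℤ → ℂ with ‖α‖_r < ∞ and ‖β‖_r < ∞, the sequence W : ℤ → ℂ defined by W_k = Σ_{k₁+k₂+k₃=k} ( conj(α_{k₁}) α_{k₂} α_{k₃} − conj(β_{k₁}) β_{k₂} β_{k₃} ) ∫₀^τ e^{2is k₁ k} ds (the inner sum over all (k₁,k₂,k₃) ∈ ℤ³ with k₁+k₂+k₃ = k converges absolutely) satisfies ‖W‖_r ≤ c τ (‖α‖_r + ‖β‖_r)² ‖α − β‖_r. (This is the Lipschitz estimate for the integral term J₁^τ of the second-order Fourier integrator, at the level of Fourier coefficients.) -/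

import Mathlib

/-- Weighted `H^r`-type norm of a sequence of Fourier coefficients. -/
noncomputable def wnorm (r : ℝ) (a : ℤ → ℂ) : ℝ :=
  Real.sqrt (∑' k : ℤ, (1 + |(k : ℝ)|) ^ (2 * r) * ‖a k‖ ^ 2)

/-!
The phase factor `e^{2isk₁k}` has modulus one, so after telescoping the cubic difference
`conj α₁ α₂ α₃ - conj β₁ β₂ β₃` each coefficient `|W_k|` is at most `τ` times a sum of three
triple convolutions of `|α|`, `|β|` and `|α - β|`. For `r > 1/2` the weighted space is an algebra
under convolution: the weight satisfies `(1+|j+m|)^r ≤ 2^r ((1+|j|)^r + (1+|m|)^r)`, and Young's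
inequality `‖f * g‖_{ℓ²} ≤ ‖f‖_{ℓ²} ‖g‖_{ℓ¹}` together with Cauchy–Schwarz
`‖g‖_{ℓ¹} ≤ (∑ (1+|k|)^{-2r})^{1/2} ‖g‖_r` gives `‖f * g‖_r ≤ C_r ‖f‖_r ‖g‖_r`.

All estimates are made for `ℝ≥0∞`-valued sequences, where every series has a meaningful sum;
`wnorm`, whose series is junk-valued `0` when it diverges, is then bounded by the `ℝ≥0∞` norm of
the absolute values.
-/

open scoped ENNReal

namespace FourierLipschitz

section L2
variable {ι : Type*}

noncomputable def l2Norm (f : ι → ℝ≥0∞) : ℝ≥0∞ := (∑' i, f i ^ (2 : ℝ)) ^ (1 / 2 : ℝ)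

lemma l2Norm_le_iff {f : ι → ℝ≥0∞} {c : ℝ≥0∞} :
    l2Norm f ≤ c ↔ ∑' i, f i ^ (2 : ℝ) ≤ c ^ (2 : ℝ) := by
  rw [l2Norm, one_div, ENNReal.rpow_inv_le_iff two_pos]

lemma l2Norm_rpow_two (f : ι → ℝ≥0∞) : l2Norm f ^ (2 : ℝ) = ∑' i, f i ^ (2 : ℝ) := by
  rw [l2Norm, ← ENNReal.rpow_mul]; norm_num

lemma finset_l2_le_l2Norm (f : ι → ℝ≥0∞) (s : Finset ι) :
    (∑ i ∈ s, f i ^ (2 : ℝ)) ^ (1 / 2 : ℝ) ≤ l2Norm f := by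
  unfold l2Norm; gcongr; exact ENNReal.sum_le_tsum s

lemma l2Norm_le_of_forall_finset {f : ι → ℝ≥0∞} {c : ℝ≥0∞}
    (h : ∀ s : Finset ι, (∑ i ∈ s, f i ^ (2 : ℝ)) ^ (1 / 2 : ℝ) ≤ c) : l2Norm f ≤ c := by
  rw [l2Norm_le_iff, ENNReal.tsum_eq_iSup_sum]
  refine iSup_le fun s => ?_
  have hs := h s
  rwa [one_div, ENNReal.rpow_inv_le_iff two_pos] at hs

lemma le_l2Norm (f : ι → ℝ≥0∞) (i : ι) : f i ≤ l2Norm f := by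
  have h := finset_l2_le_l2Norm f {i}
  rwa [Finset.sum_singleton, one_div, ENNReal.rpow_rpow_inv two_ne_zero] at h

lemma l2Norm_mono {f g : ι → ℝ≥0∞} (h : f ≤ g) : l2Norm f ≤ l2Norm g := by
  unfold l2Norm; gcongr with i; exact h i

lemma l2Norm_const_mul (c : ℝ≥0∞) (f : ι → ℝ≥0∞) :
    l2Norm (fun i => c * f i) = c * l2Norm f := by
  simp only [l2Norm, ENNReal.mul_rpow_of_nonneg _ _ zero_le_two, ENNReal.tsum_mul_left,
    ENNReal.mul_rpow_of_nonneg _ _ (one_div_nonneg.2 zero_le_two), ← ENNReal.rpow_mul]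
  norm_num

lemma tsum_mul_le_l2Norm_mul_l2Norm (f g : ι → ℝ≥0∞) :
    ∑' i, f i * g i ≤ l2Norm f * l2Norm g := by
  rw [ENNReal.tsum_eq_iSup_sum]
  refine iSup_le fun s => (ENNReal.inner_le_Lp_mul_Lq s f g .two_two).trans ?_
  gcongr <;> exact finset_l2_le_l2Norm _ s

lemma l2Norm_add_le (f g : ι → ℝ≥0∞) : l2Norm (f + g) ≤ l2Norm f + l2Norm g :=
  l2Norm_le_of_forall_finset fun s => (ENNReal.Lp_add_le s f g one_le_two).trans <|
    add_le_add (finset_l2_le_l2Norm f s) (finset_l2_le_l2Norm g s)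

lemma tsum_inner_le_weight_mul_l2 (w f : ι → ℝ≥0∞) :
    ∑' i, w i * f i ≤ (∑' i, w i) ^ (1 / 2 : ℝ) * (∑' i, w i * f i ^ (2 : ℝ)) ^ (1 / 2 : ℝ) := by
  rw [ENNReal.tsum_eq_iSup_sum]
  refine iSup_le fun s => (ENNReal.inner_le_weight_mul_Lp_of_nonneg s one_le_two w f).trans ?_
  norm_num only
  gcongr <;> exact ENNReal.sum_le_tsum s

end L2

section Convolution
variable {G : Type*} [AddCommGroup G]

noncomputable def conv (f g : G → ℝ≥0∞) (k : G) : ℝ≥0∞ := ∑' j, f j * g (k - j)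

lemma conv_comm (f g : G → ℝ≥0∞) : conv f g = conv g f := by
  ext k
  rw [conv, ← (Equiv.subLeft k).tsum_eq]
  simp [conv, mul_comm]

lemma tsum_prod_eq_conv_conv (f g h : G → ℝ≥0∞) (k : G) :
    ∑' p : G × G, f p.1 * g p.2 * h (k - p.1 - p.2) = conv (conv f g) h k := by
  simp only [conv, ← ENNReal.tsum_mul_right]
  rw [ENNReal.tsum_prod (f := fun i j => f i * g j * h (k - i - j)),
    ENNReal.tsum_comm (f := fun j i => f i * g (j - i) * h (k - j))]
  refine tsum_congr fun i => ?_
  conv_rhs => rw [← (Equiv.addLeft i).tsum_eq]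
  simp [sub_sub]

lemma l2Norm_conv_le (f g : G → ℝ≥0∞) : l2Norm (conv f g) ≤ l2Norm f * ∑' j, g j := by
  set S := ∑' j, g j
  have hpt (k : G) : conv f g k ^ (2 : ℝ) ≤ S * ∑' j, g (k - j) * f j ^ (2 : ℝ) := by
    have hS : ∑' j, g (k - j) = S := (Equiv.subLeft k).tsum_eq g
    have h := tsum_inner_le_weight_mul_l2 (fun j => g (k - j)) f
    simp only [hS] at h
    calc conv f g k ^ (2 : ℝ) = (∑' j, g (k - j) * f j) ^ (2 : ℝ) := by
          simp only [conv, mul_comm]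
      _ ≤ _ := ENNReal.rpow_le_rpow h zero_le_two
      _ = _ := by
          rw [ENNReal.mul_rpow_of_nonneg _ _ zero_le_two, ← ENNReal.rpow_mul,
            ← ENNReal.rpow_mul]
          norm_num
  have hshift (j : G) : ∑' k, g (k - j) = S := (Equiv.subRight j).tsum_eq g
  rw [l2Norm_le_iff]
  calc ∑' k, conv f g k ^ (2 : ℝ) ≤ ∑' k, S * ∑' j, g (k - j) * f j ^ (2 : ℝ) :=
        ENNReal.tsum_le_tsum hpt
    _ = S * ∑' j, (∑' k, g (k - j)) * f j ^ (2 : ℝ) := by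
        rw [ENNReal.tsum_mul_left, ENNReal.tsum_comm]
        simp only [ENNReal.tsum_mul_right]
    _ = (l2Norm f * S) ^ (2 : ℝ) := by
        rw [ENNReal.mul_rpow_of_nonneg _ _ zero_le_two, l2Norm_rpow_two]
        simp only [hshift, ENNReal.tsum_mul_left, ENNReal.rpow_two]
        ring

end Convolution

section Sobolev

lemma summable_one_add_abs_rpow_neg {s : ℝ} (hs : 1 < s) :
    Summable fun k : ℤ => (1 + |(k : ℝ)|) ^ (-s) := by
  refine (Real.summable_abs_int_rpow hs).of_norm_bounded_eventually ?_
  filter_upwards [(Set.finite_singleton (0 : ℤ)).compl_mem_cofinite] with k hk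
  rw [Real.norm_of_nonneg (by positivity)]
  exact Real.rpow_le_rpow_of_nonpos (by simpa using hk) (by linarith) (by linarith)

lemma one_add_enorm_eq_ofReal (k : ℤ) : 1 + ‖k‖ₑ = ENNReal.ofReal (1 + |(k : ℝ)|) := by
  rw [ENNReal.ofReal_add zero_le_one (abs_nonneg _), ENNReal.ofReal_one, ← Int.norm_eq_abs,
    ofReal_norm]

noncomputable def weight (r : ℝ) (k : ℤ) : ℝ≥0∞ := (1 + ‖k‖ₑ) ^ r

noncomputable def sobolevNorm (r : ℝ) (f : ℤ → ℝ≥0∞) : ℝ≥0∞ := l2Norm fun k => weight r k * f k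

noncomputable def sobolevConst (r : ℝ) : ℝ≥0∞ := l2Norm fun k => (weight r k)⁻¹

variable {r : ℝ}

lemma weight_ne_zero (r : ℝ) (k : ℤ) : weight r k ≠ 0 := by
  simp [weight, ENNReal.rpow_eq_zero_iff, enorm_ne_top]

lemma weight_ne_top (r : ℝ) (k : ℤ) : weight r k ≠ ⊤ := by
  simp [weight, ENNReal.rpow_eq_top_iff, enorm_ne_top]

lemma one_le_weight (hr : 0 ≤ r) (k : ℤ) : 1 ≤ weight r k := by
  simpa [weight] using ENNReal.rpow_le_rpow (le_self_add : 1 ≤ 1 + ‖k‖ₑ) hr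

lemma sobolevNorm_mono {f g : ℤ → ℝ≥0∞} (h : f ≤ g) : sobolevNorm r f ≤ sobolevNorm r g :=
  l2Norm_mono fun k => mul_le_mul' le_rfl (h k)

lemma sobolevNorm_const_mul (c : ℝ≥0∞) (f : ℤ → ℝ≥0∞) :
    sobolevNorm r (fun k => c * f k) = c * sobolevNorm r f := by
  simp only [sobolevNorm, mul_left_comm _ c, l2Norm_const_mul]

lemma sobolevNorm_add_le (f g : ℤ → ℝ≥0∞) :
    sobolevNorm r (f + g) ≤ sobolevNorm r f + sobolevNorm r g := by
  simp only [sobolevNorm, Pi.add_apply, mul_add]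
  exact l2Norm_add_le (fun k => weight r k * f k) (fun k => weight r k * g k)

lemma le_sobolevNorm (hr : 0 ≤ r) (f : ℤ → ℝ≥0∞) (k : ℤ) : f k ≤ sobolevNorm r f :=
  (le_mul_of_one_le_left' (one_le_weight hr k)).trans (le_l2Norm _ k)

lemma sobolevConst_pos (r : ℝ) : 0 < sobolevConst r :=
  (ENNReal.inv_pos.2 (weight_ne_top r 0)).trans_le (le_l2Norm _ 0)

lemma weight_add_le (hr : 0 ≤ r) (j m : ℤ) :
    weight r (j + m) ≤ 2 ^ r * (weight r j + weight r m) :=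
  calc weight r (j + m) ≤ ((1 + ‖j‖ₑ) + (1 + ‖m‖ₑ)) ^ r := by
        refine ENNReal.rpow_le_rpow ?_ hr
        calc 1 + ‖j + m‖ₑ ≤ 1 + (‖j‖ₑ + ‖m‖ₑ) := by gcongr; exact enorm_add_le j m
          _ ≤ (1 + ‖j‖ₑ) + (1 + ‖m‖ₑ) := by rw [add_assoc]; gcongr; exact le_add_self
    _ ≤ 2 ^ r * (weight r j + weight r m) :=
        ENNReal.add_rpow_le_two_rpow_mul_rpow_add_rpow _ _ hr

lemma sobolevConst_ne_top (hr : 1 / 2 < r) : sobolevConst r ≠ ⊤ := by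
  have hterm (k : ℤ) :
      (weight r k)⁻¹ ^ (2 : ℝ) = ENNReal.ofReal ((1 + |(k : ℝ)|) ^ (-(2 * r))) := by
    rw [weight, ENNReal.inv_rpow, ← ENNReal.rpow_mul, ← ENNReal.rpow_neg, one_add_enorm_eq_ofReal,
      ENNReal.ofReal_rpow_of_pos (by positivity), mul_comm]
  have hsum := summable_one_add_abs_rpow_neg (s := 2 * r) (by linarith)
  refine ENNReal.rpow_ne_top_of_nonneg (by norm_num) ?_
  simp only [hterm, ← ENNReal.ofReal_tsum_of_nonneg (fun k => by positivity) hsum]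
  exact ENNReal.ofReal_ne_top

lemma tsum_le_sobolevConst_mul (r : ℝ) (f : ℤ → ℝ≥0∞) :
    ∑' k, f k ≤ sobolevConst r * sobolevNorm r f :=
  calc ∑' k, f k = ∑' k, (weight r k)⁻¹ * (weight r k * f k) := by
        simp only [ENNReal.inv_mul_cancel_left (weight_ne_zero r _) (weight_ne_top r _)]
    _ ≤ _ := tsum_mul_le_l2Norm_mul_l2Norm _ _

lemma weight_mul_conv_le (hr : 0 ≤ r) (f g : ℤ → ℝ≥0∞) (k : ℤ) :
    weight r k * conv f g k ≤
      2 ^ r * (conv (fun j => weight r j * f j) g k + conv f (fun j => weight r j * g j) k) := by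
  simp only [conv, ← ENNReal.tsum_add, ← ENNReal.tsum_mul_left]
  refine ENNReal.tsum_le_tsum fun j => ?_
  calc weight r k * (f j * g (k - j))
      ≤ 2 ^ r * (weight r j + weight r (k - j)) * (f j * g (k - j)) := by
        gcongr
        simpa using weight_add_le hr j (k - j)
    _ = _ := by ring

lemma sobolevNorm_conv_le (hr : 0 ≤ r) (f g : ℤ → ℝ≥0∞) :
    sobolevNorm r (conv f g) ≤ 2 * 2 ^ r * sobolevConst r * sobolevNorm r f * sobolevNorm r g :=
  calc sobolevNorm r (conv f g)
      ≤ l2Norm (fun k => 2 ^ r * (conv (fun j => weight r j * f j) g k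
          + conv (fun j => weight r j * g j) f k)) := by
        simp only [conv_comm _ f]
        exact l2Norm_mono fun k => weight_mul_conv_le hr f g k
    _ ≤ 2 ^ r * (l2Norm (conv (fun j => weight r j * f j) g)
          + l2Norm (conv (fun j => weight r j * g j) f)) := by
        rw [l2Norm_const_mul]
        gcongr
        exact l2Norm_add_le _ _
    _ ≤ 2 ^ r * (sobolevNorm r f * (sobolevConst r * sobolevNorm r g)
          + sobolevNorm r g * (sobolevConst r * sobolevNorm r f)) := by
        gcongr <;>
          exact (l2Norm_conv_le _ _).trans (mul_le_mul' le_rfl (tsum_le_sobolevConst_mul r _))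
    _ = _ := by ring

lemma sobolevNorm_conv_conv_le (hr : 0 ≤ r) (f g h : ℤ → ℝ≥0∞) :
    sobolevNorm r (conv (conv f g) h) ≤
      (2 * 2 ^ r * sobolevConst r) ^ 2 * sobolevNorm r f * sobolevNorm r g * sobolevNorm r h :=
  calc sobolevNorm r (conv (conv f g) h)
      ≤ 2 * 2 ^ r * sobolevConst r * sobolevNorm r (conv f g) * sobolevNorm r h :=
        sobolevNorm_conv_le hr _ _
    _ ≤ 2 * 2 ^ r * sobolevConst r *
          (2 * 2 ^ r * sobolevConst r * sobolevNorm r f * sobolevNorm r g) * sobolevNorm r h := by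
        gcongr; exact sobolevNorm_conv_le hr f g
    _ = _ := by ring

lemma wnorm_nonneg (r : ℝ) (a : ℤ → ℂ) : 0 ≤ wnorm r a := Real.sqrt_nonneg _

lemma ofReal_wnorm {a : ℤ → ℂ} (ha : Summable fun k : ℤ => (1 + |(k : ℝ)|) ^ (2 * r) * ‖a k‖ ^ 2) :
    ENNReal.ofReal (wnorm r a) = sobolevNorm r fun k => ‖a k‖ₑ := by
  have hterm (k : ℤ) : ENNReal.ofReal ((1 + |(k : ℝ)|) ^ (2 * r) * ‖a k‖ ^ 2)
      = (weight r k * ‖a k‖ₑ) ^ (2 : ℝ) := by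
    rw [ENNReal.mul_rpow_of_nonneg _ _ zero_le_two, weight, ← ENNReal.rpow_mul,
      one_add_enorm_eq_ofReal, ENNReal.ofReal_rpow_of_pos (by positivity), ← ofReal_norm,
      ENNReal.ofReal_rpow_of_nonneg (norm_nonneg _) zero_le_two,
      ← ENNReal.ofReal_mul (by positivity), mul_comm r, Real.rpow_two]
  rw [wnorm, Real.sqrt_eq_rpow, ← ENNReal.ofReal_rpow_of_nonneg (tsum_nonneg fun k => by positivity)
    (by norm_num), ENNReal.ofReal_tsum_of_nonneg (fun k => by positivity) ha]
  simp only [hterm, sobolevNorm, l2Norm]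

lemma ofReal_wnorm_le (a : ℤ → ℂ) : ENNReal.ofReal (wnorm r a) ≤ sobolevNorm r fun k => ‖a k‖ₑ := by
  by_cases ha : Summable fun k : ℤ => (1 + |(k : ℝ)|) ^ (2 * r) * ‖a k‖ ^ 2
  · exact (ofReal_wnorm ha).le
  · simp [wnorm, tsum_eq_zero_of_not_summable ha]

lemma summable_mul_norm_sub_sq {ι E : Type*} [SeminormedAddCommGroup E] {w : ι → ℝ} {f g : ι → E}
    (hw : ∀ i, 0 ≤ w i) (hf : Summable fun i => w i * ‖f i‖ ^ 2)
    (hg : Summable fun i => w i * ‖g i‖ ^ 2) : Summable fun i => w i * ‖f i - g i‖ ^ 2 := by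
  refine .of_nonneg_of_le (fun i => mul_nonneg (hw i) (sq_nonneg _)) (fun i => ?_)
    ((hf.add hg).mul_left 2)
  calc w i * ‖f i - g i‖ ^ 2 ≤ w i * (2 * (‖f i‖ ^ 2 + ‖g i‖ ^ 2)) :=
        mul_le_mul_of_nonneg_left
          ((pow_le_pow_left₀ (norm_nonneg _) (norm_sub_le (f i) (g i)) 2).trans add_sq_le) (hw i)
    _ = 2 * (w i * ‖f i‖ ^ 2 + w i * ‖g i‖ ^ 2) := by ring

end Sobolev

section CubicDifference

noncomputable def lipConst (r : ℝ) : ℝ≥0∞ := 3 * (2 * 2 ^ r * sobolevConst r) ^ 2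

lemma lipConst_ne_top {r : ℝ} (hr : 1 / 2 < r) : lipConst r ≠ ⊤ := by
  have hC := sobolevConst_ne_top hr
  unfold lipConst; finiteness

lemma lipConst_ne_zero (r : ℝ) : lipConst r ≠ 0 := by
  simp [lipConst, (sobolevConst_pos r).ne']

noncomputable def cubicDiffMajorant (a b d : ℤ → ℝ≥0∞) : ℤ → ℝ≥0∞ :=
  conv (conv d a) a + conv (conv b d) a + conv (conv b b) d

lemma sobolevNorm_cubicDiffMajorant_le {r : ℝ} (hr : 0 ≤ r) (a b d : ℤ → ℝ≥0∞) :
    sobolevNorm r (cubicDiffMajorant a b d) ≤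
      lipConst r * (sobolevNorm r a + sobolevNorm r b) ^ 2 * sobolevNorm r d := by
  set K := 2 * 2 ^ r * sobolevConst r
  set M := sobolevNorm r a + sobolevNorm r b
  have ha : sobolevNorm r a ≤ M := le_self_add
  have hb : sobolevNorm r b ≤ M := le_add_self
  calc sobolevNorm r (cubicDiffMajorant a b d)
      ≤ sobolevNorm r (conv (conv d a) a) + sobolevNorm r (conv (conv b d) a)
          + sobolevNorm r (conv (conv b b) d) :=
        (sobolevNorm_add_le _ _).trans (add_le_add_left (sobolevNorm_add_le _ _) _)
    _ ≤ K ^ 2 * sobolevNorm r d * M * M + K ^ 2 * M * sobolevNorm r d * M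
          + K ^ 2 * M * M * sobolevNorm r d := by
        gcongr <;> refine (sobolevNorm_conv_conv_le hr _ _ _).trans ?_ <;> gcongr
    _ = _ := by rw [lipConst]; ring

lemma enorm_conj_mul_mul_sub_le (a₁ a₂ a₃ b₁ b₂ b₃ : ℂ) :
    ‖(starRingEnd ℂ) a₁ * a₂ * a₃ - (starRingEnd ℂ) b₁ * b₂ * b₃‖ₑ ≤
      ‖a₁ - b₁‖ₑ * ‖a₂‖ₑ * ‖a₃‖ₑ + ‖b₁‖ₑ * ‖a₂ - b₂‖ₑ * ‖a₃‖ₑ + ‖b₁‖ₑ * ‖b₂‖ₑ * ‖a₃ - b₃‖ₑ := by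
  have h : (starRingEnd ℂ) a₁ * a₂ * a₃ - (starRingEnd ℂ) b₁ * b₂ * b₃
      = (starRingEnd ℂ) (a₁ - b₁) * a₂ * a₃ + (starRingEnd ℂ) b₁ * (a₂ - b₂) * a₃
        + (starRingEnd ℂ) b₁ * b₂ * (a₃ - b₃) := by
    rw [map_sub]; ring
  rw [h]
  refine (enorm_add_le _ _).trans ((add_le_add_left (enorm_add_le _ _) _).trans ?_)
  simp only [enorm_mul, RCLike.enorm_conj, le_refl]

lemma enorm_integral_exp_le {τ : ℝ} (hτ : 0 ≤ τ) (m : ℤ) :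
    ‖∫ s in (0 : ℝ)..τ, Complex.exp (2 * Complex.I * s * (m : ℂ))‖ₑ ≤ ENNReal.ofReal τ := by
  rw [← ofReal_norm]
  refine ENNReal.ofReal_le_ofReal ?_
  have h := intervalIntegral.norm_integral_le_of_norm_le_const (a := 0) (b := τ) (C := 1)
    (f := fun s : ℝ => Complex.exp (2 * Complex.I * s * (m : ℂ))) fun s _ => by
      have : 2 * Complex.I * s * (m : ℂ) = ((2 * s * m : ℝ) : ℂ) * Complex.I := by push_cast; ring
      rw [this, Complex.norm_exp_ofReal_mul_I]
  simpa [abs_of_nonneg hτ] using h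

noncomputable def cubicDiffTerm (τ : ℝ) (α β : ℤ → ℂ) (k : ℤ) (p : ℤ × ℤ) : ℂ :=
  ((starRingEnd ℂ) (α p.1) * α p.2 * α (k - p.1 - p.2)
      - (starRingEnd ℂ) (β p.1) * β p.2 * β (k - p.1 - p.2)) *
    ∫ s in (0 : ℝ)..τ, Complex.exp (2 * Complex.I * s * ((p.1 * k : ℤ) : ℂ))

lemma tsum_enorm_cubicDiffTerm_le {τ : ℝ} (hτ : 0 ≤ τ) (α β : ℤ → ℂ) (k : ℤ) :
    ∑' p, ‖cubicDiffTerm τ α β k p‖ₑ ≤ ENNReal.ofReal τ *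
      cubicDiffMajorant (fun j => ‖α j‖ₑ) (fun j => ‖β j‖ₑ) (fun j => ‖α j - β j‖ₑ) k := by
  simp only [cubicDiffMajorant, Pi.add_apply, ← tsum_prod_eq_conv_conv, ← ENNReal.tsum_add,
    ← ENNReal.tsum_mul_left]
  refine ENNReal.tsum_le_tsum fun p => ?_
  rw [cubicDiffTerm, enorm_mul, mul_comm]
  exact mul_le_mul' (enorm_integral_exp_le hτ _) (enorm_conj_mul_mul_sub_le _ _ _ _ _ _)

variable {r τ : ℝ} {α β : ℤ → ℂ}
  (hα : Summable fun k : ℤ => (1 + |(k : ℝ)|) ^ (2 * r) * ‖α k‖ ^ 2)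
  (hβ : Summable fun k : ℤ => (1 + |(k : ℝ)|) ^ (2 * r) * ‖β k‖ ^ 2)
include hα hβ

lemma sobolevNorm_cubicDiffMajorant_le_wnorm (hr : 0 ≤ r) :
    sobolevNorm r (cubicDiffMajorant (fun j => ‖α j‖ₑ) (fun j => ‖β j‖ₑ) (fun j => ‖α j - β j‖ₑ))
      ≤ lipConst r * (ENNReal.ofReal (wnorm r α) + ENNReal.ofReal (wnorm r β)) ^ 2 *
        ENNReal.ofReal (wnorm r fun k => α k - β k) := by
  rw [ofReal_wnorm hα, ofReal_wnorm hβ,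
    ofReal_wnorm (summable_mul_norm_sub_sq (fun k => by positivity) hα hβ)]
  exact sobolevNorm_cubicDiffMajorant_le hr _ _ _

lemma summable_norm_cubicDiffTerm (hr : 1 / 2 < r) (hτ : 0 ≤ τ) (k : ℤ) :
    Summable fun p => ‖cubicDiffTerm τ α β k p‖ := by
  have hD := (le_sobolevNorm (by linarith) _ k).trans
    (sobolevNorm_cubicDiffMajorant_le_wnorm hα hβ (by linarith))
  have hL := lipConst_ne_top hr
  refine tsum_enorm_ne_top_iff_summable_norm.1 <|
    ne_top_of_le_ne_top ?_ (tsum_enorm_cubicDiffTerm_le hτ α β k)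
  exact ENNReal.mul_ne_top ENNReal.ofReal_ne_top (ne_top_of_le_ne_top (by finiteness) hD)

lemma ofReal_wnorm_tsum_cubicDiffTerm_le (hr : 0 ≤ r) (hτ : 0 ≤ τ) :
    ENNReal.ofReal (wnorm r fun k => ∑' p, cubicDiffTerm τ α β k p) ≤
      ENNReal.ofReal τ * (lipConst r *
        (ENNReal.ofReal (wnorm r α) + ENNReal.ofReal (wnorm r β)) ^ 2 *
          ENNReal.ofReal (wnorm r fun k => α k - β k)) :=
  calc ENNReal.ofReal (wnorm r fun k => ∑' p, cubicDiffTerm τ α β k p)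
      ≤ sobolevNorm r fun k => ENNReal.ofReal τ *
          cubicDiffMajorant (fun j => ‖α j‖ₑ) (fun j => ‖β j‖ₑ) (fun j => ‖α j - β j‖ₑ) k :=
        (ofReal_wnorm_le _).trans <| sobolevNorm_mono fun k =>
          enorm_tsum_le_tsum_enorm.trans (tsum_enorm_cubicDiffTerm_le hτ α β k)
    _ ≤ _ := by
        rw [sobolevNorm_const_mul]
        gcongr
        exact sobolevNorm_cubicDiffMajorant_le_wnorm hα hβ hr

end CubicDifference
end FourierLipschitz

open FourierLipschitz in
theorem stmt10 (r : ℝ) (hr : 1 / 2 < r) :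
    ∃ c > 0, ∀ τ : ℝ, 0 ≤ τ → ∀ α β : ℤ → ℂ,
      Summable (fun k : ℤ => (1 + |(k : ℝ)|) ^ (2 * r) * ‖α k‖ ^ 2) →
      Summable (fun k : ℤ => (1 + |(k : ℝ)|) ^ (2 * r) * ‖β k‖ ^ 2) →
      (∀ k : ℤ, Summable (fun p : ℤ × ℤ =>
        ‖(((starRingEnd ℂ) (α p.1) * α p.2 * α (k - p.1 - p.2)
            - (starRingEnd ℂ) (β p.1) * β p.2 * β (k - p.1 - p.2)) *
          ∫ s in (0 : ℝ)..τ, Complex.exp (2 * Complex.I * s * ((p.1 * k : ℤ) : ℂ)))‖)) ∧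
      wnorm r (fun k : ℤ => ∑' p : ℤ × ℤ,
          ((starRingEnd ℂ) (α p.1) * α p.2 * α (k - p.1 - p.2)
            - (starRingEnd ℂ) (β p.1) * β p.2 * β (k - p.1 - p.2)) *
          ∫ s in (0 : ℝ)..τ, Complex.exp (2 * Complex.I * s * ((p.1 * k : ℤ) : ℂ)))
        ≤ c * τ * (wnorm r α + wnorm r β) ^ 2 * wnorm r (fun k => α k - β k) := by
  have hr0 : 0 ≤ r := by linarith
  refine ⟨(lipConst r).toReal, ENNReal.toReal_pos (lipConst_ne_zero r) (lipConst_ne_top hr),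
    fun τ hτ α β hα hβ => ⟨summable_norm_cubicDiffTerm hα hβ hr hτ, ?_⟩⟩
  have hα₀ := wnorm_nonneg r α
  have hβ₀ := wnorm_nonneg r β
  have hαβ₀ := wnorm_nonneg r fun k => α k - β k
  rw [← ENNReal.ofReal_le_ofReal_iff (by positivity)]
  refine (ofReal_wnorm_tsum_cubicDiffTerm_le hα hβ hr0 hτ).trans_eq ?_
  rw [ENNReal.ofReal_mul (by positivity), ENNReal.ofReal_mul (by positivity),
    ENNReal.ofReal_mul (by positivity), ENNReal.ofReal_pow (by positivity),
    ENNReal.ofReal_add hα₀ hβ₀, ENNReal.ofReal_toReal (lipConst_ne_top hr)]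
  ring
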